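/- Let E be a finite-dimensional real inner product space, let f : E → ℝ be differentiable with gradient ∇f that is L-Lipschitz on E for some L > 0, and suppose f attains a global minimum value f* on E. Let b₄ > 0, b₅ ≥ 0, ε ≥ 0, θ > 0 with θ·b₄ ≤ 2, and let (x_k) be a sequence in E with x_{k+1} = x_k − η_k ∇f(x_k), where θ < η_k ≤ 1/L for all k. Assume the perturbed Polyak–Łojasiewicz inequality ‖∇f(x_k)‖² ≥ b₄·(f(x_k) − f*) − b₅·ε holds for every k ≥ 0. Then for all k ≥ 0, f(x_k) − f* ≤ (1 − θ·b₄/2)^k · (f(x₀) − f*) + b₅·ε/b₄. -/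

import Mathlib

open InnerProductSpace intervalIntegral

lemma descent_lemma {E : Type*} [NormedAddCommGroup E] [InnerProductSpace ℝ E]
    [FiniteDimensional ℝ E]
    (f : E → ℝ) (hf : Differentiable ℝ f)
    (L : ℝ) (hL : 0 < L)
    (hLip : LipschitzWith L.toNNReal (fun x => gradient f x))
    (x v : E) :
    f (x + v) ≤ f x + ⟪gradient f x, v⟫_ℝ + L / 2 * ‖v‖ ^ 2 := by
  set g : ℝ → ℝ := fun t => f (x + t • v) with hg
  have hgrad_cont : Continuous (fun y => gradient f y) := hLip.continuous
  have hderiv : ∀ t : ℝ, HasDerivAt g (⟪gradient f (x + t • v), v⟫_ℝ) t := by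
    intro t
    have hc : HasDerivAt (fun t : ℝ => x + t • v) v t := by
      simpa using ((hasDerivAt_id t).smul_const v).const_add x
    have hF := (hf (x + t • v)).hasGradientAt.hasFDerivAt
    have := hF.comp_hasDerivAt t hc
    simpa [InnerProductSpace.toDual_apply_apply, hg, Function.comp_def] using this
  have hint : IntervalIntegrable (fun t => ⟪gradient f (x + t • v), v⟫_ℝ) MeasureTheory.volume 0 1 := by
    apply Continuous.intervalIntegrable
    exact (hgrad_cont.comp (by continuity)).inner continuous_const
  have hftc : ∫ t in (0:ℝ)..1, ⟪gradient f (x + t • v), v⟫_ℝ = g 1 - g 0 :=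
    integral_eq_sub_of_hasDerivAt (fun t _ => hderiv t) hint
  have hbound : ∀ t ∈ Set.Icc (0:ℝ) 1,
      ⟪gradient f (x + t • v), v⟫_ℝ ≤ ⟪gradient f x, v⟫_ℝ + L * t * ‖v‖ ^ 2 := by
    intro t ht
    have h1 : ⟪gradient f (x + t • v), v⟫_ℝ - ⟪gradient f x, v⟫_ℝ
        = ⟪gradient f (x + t • v) - gradient f x, v⟫_ℝ := by
      rw [inner_sub_left]
    have h2 : ⟪gradient f (x + t • v) - gradient f x, v⟫_ℝ
        ≤ ‖gradient f (x + t • v) - gradient f x‖ * ‖v‖ := real_inner_le_norm _ _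
    have h3 : ‖gradient f (x + t • v) - gradient f x‖ ≤ L * (t * ‖v‖) := by
      have := hLip.dist_le_mul (x + t • v) x
      rw [dist_eq_norm, dist_eq_norm, Real.coe_toNNReal _ hL.le] at this
      calc ‖gradient f (x + t • v) - gradient f x‖ ≤ L * ‖x + t • v - x‖ := this
        _ = L * (t * ‖v‖) := by
            rw [add_sub_cancel_left, norm_smul, Real.norm_eq_abs, abs_of_nonneg ht.1]
    nlinarith [norm_nonneg v, norm_nonneg (gradient f (x + t • v) - gradient f x), h2.trans (by nlinarith [norm_nonneg v] : ‖gradient f (x + t • v) - gradient f x‖ * ‖v‖ ≤ L * (t * ‖v‖) * ‖v‖)]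
  have hint2 : IntervalIntegrable (fun t => ⟪gradient f x, v⟫_ℝ + L * t * ‖v‖ ^ 2) MeasureTheory.volume 0 1 := by
    apply Continuous.intervalIntegrable; continuity
  have hmono := integral_mono_on (by norm_num : (0:ℝ) ≤ 1) hint hint2 hbound
  have hrhs : ∫ t in (0:ℝ)..1, (⟪gradient f x, v⟫_ℝ + L * t * ‖v‖ ^ 2)
      = ⟪gradient f x, v⟫_ℝ + L / 2 * ‖v‖ ^ 2 := by
    simp only [mul_comm, mul_assoc]
    rw [integral_add (by apply Continuous.intervalIntegrable; continuity)
      (by apply Continuous.intervalIntegrable; continuity)]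
    simp [integral_const_mul, integral_id]
    ring
  have hfin : g 1 - g 0 ≤ ⟪gradient f x, v⟫_ℝ + L / 2 * ‖v‖ ^ 2 := by
    rw [← hftc]; rw [hrhs] at hmono; exact hmono
  have hg1 : g 1 = f (x + v) := by simp [hg]
  have hg0 : g 0 = f x := by simp [hg]
  rw [hg1, hg0] at hfin
  linarith



/-- Linear convergence of gradient descent under a perturbed
Polyak–Łojasiewicz inequality.  Let `f : E → ℝ` be differentiable with `L`-Lipschitz
gradient attaining a global minimum value `fstar`, let `b₄ > 0`, `b₅ ≥ 0`, `ε ≥ 0`,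
`θ > 0` with `θ·b₄ ≤ 2`, and let `x (k+1) = x k − η k • ∇f (x k)` with
`θ < η k ≤ 1/L`.  If `‖∇f(x k)‖² ≥ b₄(f(x k) − fstar) − b₅ε` for all `k`, then
`f(x k) − fstar ≤ (1 − θb₄/2)^k (f(x 0) − fstar) + b₅ε/b₄`. -/
theorem gradient_descent_perturbed_PL_linear_convergence
    {E : Type*} [NormedAddCommGroup E] [InnerProductSpace ℝ E]
    [FiniteDimensional ℝ E]
    (f : E → ℝ) (hf : Differentiable ℝ f)
    (L : ℝ) (hL : 0 < L)
    (hLip : LipschitzWith L.toNNReal (fun x => gradient f x))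
    (fstar : ℝ) (xstar : E) (hxstar : f xstar = fstar)
    (hglobal : ∀ x, fstar ≤ f x)
    (b₄ b₅ ε θ : ℝ) (hb₄ : 0 < b₄) (hb₅ : 0 ≤ b₅) (hε : 0 ≤ ε)
    (hθ : 0 < θ) (hθb₄ : θ * b₄ ≤ 2)
    (η : ℕ → ℝ) (x : ℕ → E)
    (hη : ∀ k, θ < η k ∧ η k ≤ 1 / L)
    (hiter : ∀ k, x (k + 1) = x k - η k • gradient f (x k))
    (hPL : ∀ k, b₄ * (f (x k) - fstar) - b₅ * ε ≤ ‖gradient f (x k)‖ ^ 2) :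
    ∀ k, f (x k) - fstar ≤
      (1 - θ * b₄ / 2) ^ k * (f (x 0) - fstar) + b₅ * ε / b₄ := by
  set r : ℝ := 1 - θ * b₄ / 2 with hr
  have hr0 : 0 ≤ r := by simp only [hr]; linarith
  have hr1 : r ≤ 1 := by simp only [hr]; nlinarith
  -- one-step decrease
  have hstep : ∀ k, f (x (k + 1)) - fstar ≤ r * (f (x k) - fstar) + θ * (b₅ * ε) / 2 := by
    intro k
    set g := gradient f (x k) with hgdef
    have hηk := hη k
    have hηpos : 0 < η k := hθ.trans hηk.1
    have hd1 := descent_lemma f hf L hL hLip (x k) (-(η k • g))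
    have hy : x k + -(η k • g) = x (k + 1) := by rw [hiter k]; abel
    rw [hy] at hd1
    have hinner : ⟪g, -(η k • g)⟫_ℝ = -(η k * ‖g‖ ^ 2) := by
      rw [inner_neg_right, real_inner_smul_right, real_inner_self_eq_norm_sq]
    have hnorm : ‖-(η k • g)‖ ^ 2 = η k ^ 2 * ‖g‖ ^ 2 := by
      rw [norm_neg, norm_smul, mul_pow, Real.norm_eq_abs, sq_abs]
    rw [hinner, hnorm] at hd1
    -- f(x_{k+1}) ≤ f(x_k) - η(1 - Lη/2)‖g‖² ≤ f(x_k) - (η/2)‖g‖² ≤ f(x_k) - (θ/2)‖g‖²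
    have hLη : L * η k ≤ 1 := by
      have := hηk.2
      rw [le_div_iff₀ hL] at this
      linarith
    have hdesc2 : f (x (k + 1)) ≤ f (x k) - θ / 2 * ‖g‖ ^ 2 := by
      nlinarith [mul_nonneg (le_of_lt (sub_pos.2 hηk.1)) (sq_nonneg ‖g‖),
        mul_nonneg (mul_nonneg hηpos.le (sub_nonneg.2 hLη)) (sq_nonneg ‖g‖)]
    have hPLk := hPL k
    rw [← hgdef] at hPLk
    rw [hr]
    nlinarith [mul_le_mul_of_nonneg_left hPLk (by positivity : (0:ℝ) ≤ θ / 2)]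
  intro k
  induction k with
  | zero =>
      simp only [pow_zero, one_mul]
      have : 0 ≤ b₅ * ε / b₄ := by positivity
      linarith
  | succ n ih =>
      calc f (x (n + 1)) - fstar ≤ r * (f (x n) - fstar) + θ * (b₅ * ε) / 2 := hstep n
        _ ≤ r * (r ^ n * (f (x 0) - fstar) + b₅ * ε / b₄) + θ * (b₅ * ε) / 2 := by
            gcongr
        _ ≤ r ^ (n + 1) * (f (x 0) - fstar) + b₅ * ε / b₄ := by
            have : r * (b₅ * ε / b₄) + θ * (b₅ * ε) / 2 = b₅ * ε / b₄ := by
              field_simp [hr]; ring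
            rw [pow_succ]
            nlinarith [this]
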